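/- Let {k_n} be a sequence of positive integers with ∑_{n=1}^∞ e^{−ε k_n} < ∞ for every ε > 0, and let X_n have chi distribution with k_n degrees of freedom (defined on a common probability space, independent or not). Then X_n/√{k_n} → 1 almost surely as n → ∞. -/

import Mathlib

open MeasureTheory Filter ProbabilityTheory

section Aux

open Real

lemma gammaPDF_measurable' (a r : ℝ) : Measurable (gammaPDF a r) :=
  (measurable_gammaPDFReal a r).ennreal_ofReal

lemma mgf_gamma' {a r t : ℝ} (ha : 0 < a) (hr : 0 < r) (ht : t < r) :
    ∫⁻ x, ENNReal.ofReal (Real.exp (t * x)) ∂(gammaMeasure a r)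
      = ENNReal.ofReal ((r / (r - t)) ^ a) := by
  have hrt : 0 < r - t := by linarith
  rw [gammaMeasure, lintegral_withDensity_eq_lintegral_mul _ (gammaPDF_measurable' a r)
    (by fun_prop)]
  have hpt : ∀ x : ℝ, (gammaPDF a r * fun x => ENNReal.ofReal (Real.exp (t * x))) x
      = ENNReal.ofReal ((r / (r - t)) ^ a) * gammaPDF a (r - t) x := by
    intro x
    rcases le_or_gt 0 x with hx | hx
    · simp only [Pi.mul_apply, gammaPDF_of_nonneg hx]
      rw [← ENNReal.ofReal_mul (by positivity), ← ENNReal.ofReal_mul (by positivity)]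
      congr 1
      have h1 : r ^ a = (r / (r - t)) ^ a * (r - t) ^ a := by
        rw [← Real.mul_rpow (by positivity) hrt.le, div_mul_cancel₀ _ hrt.ne']
      have h2 : Real.exp (-(r * x)) * Real.exp (t * x) = Real.exp (-((r - t) * x)) := by
        rw [← Real.exp_add]; ring_nf
      have hG : Real.Gamma a ≠ 0 := (Real.Gamma_pos_of_pos ha).ne'
      field_simp [h1]
      rw [h1, show -(x * (r - t)) = -((r - t) * x) by ring, ← h2]; ring
    · simp [Pi.mul_apply, gammaPDF_of_neg hx]
  rw [lintegral_congr hpt, lintegral_const_mul _ (gammaPDF_measurable' a (r - t)),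
    lintegral_gammaPDF_eq_one ha hrt, mul_one]

lemma gamma_chernoff_upper {a t y : ℝ} (ha : 0 < a) (ht : 0 < t) (ht2 : t < 1/2) :
    gammaMeasure a (1/2) {x | y ≤ x}
      ≤ ENNReal.ofReal (Real.exp (-(t * y)) * (1/2 / (1/2 - t)) ^ a) := by
  set μ := gammaMeasure a (1/2)
  have hmeas : AEMeasurable (fun x : ℝ => ENNReal.ofReal (Real.exp (t * x))) μ := by fun_prop
  have key := mul_meas_ge_le_lintegral₀ hmeas (ENNReal.ofReal (Real.exp (t * y)))
  rw [mgf_gamma' ha (by norm_num) ht2] at key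
  have hsub : {x : ℝ | y ≤ x} ⊆ {x : ℝ | ENNReal.ofReal (Real.exp (t * y))
      ≤ ENNReal.ofReal (Real.exp (t * x))} := by
    intro x hx
    exact ENNReal.ofReal_le_ofReal (Real.exp_le_exp.mpr (by nlinarith [Set.mem_setOf_eq ▸ hx]))
  have key2 : ENNReal.ofReal (Real.exp (t * y)) * μ {x | y ≤ x}
      ≤ ENNReal.ofReal ((1/2 / (1/2 - t)) ^ a) :=
    le_trans (mul_le_mul_right (measure_mono hsub) _) key
  calc μ {x | y ≤ x}
      = ENNReal.ofReal (Real.exp (-(t * y))) *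
        (ENNReal.ofReal (Real.exp (t * y)) * μ {x | y ≤ x}) := by
        rw [← mul_assoc, ← ENNReal.ofReal_mul (by positivity), ← Real.exp_add]
        simp
    _ ≤ ENNReal.ofReal (Real.exp (-(t * y))) * ENNReal.ofReal ((1/2 / (1/2 - t)) ^ a) :=
        mul_le_mul_right key2 _
    _ = ENNReal.ofReal (Real.exp (-(t * y)) * (1/2 / (1/2 - t)) ^ a) := by
        rw [← ENNReal.ofReal_mul (by positivity)]

lemma gamma_chernoff_lower {a t y : ℝ} (ha : 0 < a) (ht : 0 < t) :
    gammaMeasure a (1/2) {x | x ≤ y}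
      ≤ ENNReal.ofReal (Real.exp (t * y) * (1/2 / (1/2 + t)) ^ a) := by
  set μ := gammaMeasure a (1/2)
  have hmeas : AEMeasurable (fun x : ℝ => ENNReal.ofReal (Real.exp (-t * x))) μ := by fun_prop
  have key := mul_meas_ge_le_lintegral₀ hmeas (ENNReal.ofReal (Real.exp (-t * y)))
  rw [mgf_gamma' ha (by norm_num) (by linarith)] at key
  have hh : (1:ℝ)/2 - -t = 1/2 + t := by ring
  rw [hh] at key
  have hsub : {x : ℝ | x ≤ y} ⊆ {x : ℝ | ENNReal.ofReal (Real.exp (-t * y))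
      ≤ ENNReal.ofReal (Real.exp (-t * x))} := by
    intro x hx
    exact ENNReal.ofReal_le_ofReal (Real.exp_le_exp.mpr (by nlinarith [Set.mem_setOf_eq ▸ hx]))
  have key2 : ENNReal.ofReal (Real.exp (-t * y)) * μ {x | x ≤ y}
      ≤ ENNReal.ofReal ((1/2 / (1/2 + t)) ^ a) :=
    le_trans (mul_le_mul_right (measure_mono hsub) _) key
  calc μ {x | x ≤ y}
      = ENNReal.ofReal (Real.exp (t * y)) *
        (ENNReal.ofReal (Real.exp (-t * y)) * μ {x | x ≤ y}) := by
        rw [← mul_assoc, ← ENNReal.ofReal_mul (by positivity), ← Real.exp_add]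
        simp
    _ ≤ ENNReal.ofReal (Real.exp (t * y)) * ENNReal.ofReal ((1/2 / (1/2 + t)) ^ a) :=
        mul_le_mul_right key2 _
    _ = ENNReal.ofReal (Real.exp (t * y) * (1/2 / (1/2 + t)) ^ a) := by
        rw [← ENNReal.ofReal_mul (by positivity)]

lemma exp_quad_lb' {s : ℝ} (hs : 0 ≤ s) : 1 + s + s^2/4 ≤ Real.exp s := by
  have h := Real.add_one_le_exp (s/2)
  have h3 : Real.exp (s/2) * Real.exp (s/2) = Real.exp s := by
    rw [← Real.exp_add]; ring_nf
  nlinarith [Real.exp_pos (s/2)]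

lemma core_upper' {ε : ℝ} (h1 : 0 < ε) (h2 : ε ≤ 1/4) :
    Real.exp (-(ε/2 + 3*ε^2/8)) ≤ 1 - ε/2 := by
  have hq := exp_quad_lb' (s := ε/2 + 3*ε^2/8) (by positivity)
  have h3 : Real.exp (-(ε/2 + 3*ε^2/8)) * Real.exp (ε/2 + 3*ε^2/8) = 1 := by
    rw [← Real.exp_add]; ring_nf; exact Real.exp_zero
  have hkey : 1 ≤ (1 - ε/2) * (1 + (ε/2 + 3*ε^2/8) + (ε/2 + 3*ε^2/8)^2/4) := by nlinarith
  nlinarith [Real.exp_pos (-(ε/2 + 3*ε^2/8)), Real.exp_pos (ε/2 + 3*ε^2/8),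
    mul_le_mul_of_nonneg_left hq (Real.exp_pos (-(ε/2 + 3*ε^2/8))).le]

lemma core_lower' {ε : ℝ} (h1 : 0 < ε) (h2 : ε ≤ 1/4) :
    Real.exp (ε/2 - 3*ε^2/8) ≤ 1 + ε/2 := by
  have hu : (0:ℝ) ≤ ε/2 - 3*ε^2/8 := by nlinarith
  have h1' := Real.add_one_le_exp (-(ε/2 - 3*ε^2/8))
  have h3 : Real.exp (ε/2 - 3*ε^2/8) * Real.exp (-(ε/2 - 3*ε^2/8)) = 1 := by
    rw [← Real.exp_add]; ring_nf; exact Real.exp_zero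
  have hkey : 1 ≤ (1 + ε/2) * (1 - (ε/2 - 3*ε^2/8)) := by nlinarith
  nlinarith [Real.exp_pos (ε/2 - 3*ε^2/8), Real.exp_pos (-(ε/2 - 3*ε^2/8)),
    mul_le_mul_of_nonneg_left h1' (Real.exp_pos (ε/2 - 3*ε^2/8)).le]

lemma tail_scalar_upper' (k : ℕ) {ε : ℝ} (h1 : 0 < ε) (h2 : ε ≤ 1/4) :
    Real.exp (-(ε/4 * ((k:ℝ) * (1+ε)))) * (1/2 / (1/2 - ε/4)) ^ ((k:ℝ)/2)
      ≤ Real.exp (-(ε^2/16) * k) := by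
  have hd : (0:ℝ) < 1/2 - ε/4 := by linarith
  have hC : (0:ℝ) < 1/2 / (1/2 - ε/4) := div_pos (by norm_num) hd
  have hCeq : (1:ℝ)/2 / (1/2 - ε/4) = 1 / (1 - ε/2) := by
    rw [div_eq_div_iff (by linarith) (by linarith)]; ring
  have hCle : (1:ℝ)/2 / (1/2 - ε/4) ≤ Real.exp (ε/2 + 3*ε^2/8) := by
    rw [hCeq, div_le_iff₀ (by linarith)]
    have hmul := mul_le_mul_of_nonneg_right (core_upper' h1 h2)
      (Real.exp_pos (ε/2 + 3*ε^2/8)).le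
    have hme : Real.exp (-(ε/2 + 3*ε^2/8)) * Real.exp (ε/2 + 3*ε^2/8) = 1 := by
      rw [← Real.exp_add]; ring_nf; exact Real.exp_zero
    linarith
  have hlog : Real.log (1/2 / (1/2 - ε/4)) ≤ ε/2 + 3*ε^2/8 :=
    (Real.log_le_iff_le_exp hC).mpr hCle
  rw [Real.rpow_def_of_pos hC, ← Real.exp_add, Real.exp_le_exp]
  have hk : (0:ℝ) ≤ (k:ℝ) := Nat.cast_nonneg k
  nlinarith [mul_le_mul_of_nonneg_right hlog (by positivity : (0:ℝ) ≤ (k:ℝ)/2)]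

lemma tail_scalar_lower' (k : ℕ) {ε : ℝ} (h1 : 0 < ε) (h2 : ε ≤ 1/4) :
    Real.exp (ε/4 * ((k:ℝ) * (1-ε))) * (1/2 / (1/2 + ε/4)) ^ ((k:ℝ)/2)
      ≤ Real.exp (-(ε^2/16) * k) := by
  have hC : (0:ℝ) < 1/2 / (1/2 + ε/4) := by positivity
  have hlog : Real.log (1/2 / (1/2 + ε/4)) ≤ -(ε/2 - 3*ε^2/8) := by
    have hCeq : (1:ℝ)/2 / (1/2 + ε/4) = 1 / (1 + ε/2) := by
      rw [div_eq_div_iff (by linarith) (by linarith)]; ring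
    rw [hCeq, Real.log_div one_ne_zero (by linarith), Real.log_one, zero_sub, neg_le_neg_iff]
    exact (Real.le_log_iff_exp_le (by linarith)).mpr (core_lower' h1 h2)
  rw [Real.rpow_def_of_pos hC, ← Real.exp_add, Real.exp_le_exp]
  have hk : (0:ℝ) ≤ (k:ℝ) := Nat.cast_nonneg k
  nlinarith [mul_le_mul_of_nonneg_right hlog (by positivity : (0:ℝ) ≤ (k:ℝ)/2)]

end Aux

/-- Chi-squared distribution with `k` degrees of freedom: Gamma with shape `k/2`, rate `1/2`. -/
noncomputable def chiSquaredMeasure (k : ℕ) : Measure ℝ := gammaMeasure (k / 2 : ℝ) (1 / 2)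

/-- Chi distribution with `k` degrees of freedom. -/
noncomputable def chiMeasure (k : ℕ) : Measure ℝ :=
  Measure.map Real.sqrt (chiSquaredMeasure k)

lemma chiSq_tail (k : ℕ) (hk : 0 < k) {ε : ℝ} (h1 : 0 < ε) (h2 : ε ≤ 1/4) :
    chiSquaredMeasure k {x | x ≤ (k:ℝ)*(1-ε)} + chiSquaredMeasure k {x | (k:ℝ)*(1+ε) ≤ x}
      ≤ ENNReal.ofReal (2 * Real.exp (-(ε^2/16) * k)) := by
  have ha : (0:ℝ) < (k:ℝ)/2 := by
    have : (0:ℝ) < (k:ℝ) := Nat.cast_pos.mpr hk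
    linarith
  have ht : (0:ℝ) < ε/4 := by linarith
  have ht2 : ε/4 < 1/2 := by linarith
  have hup := gamma_chernoff_upper (a := (k:ℝ)/2) (t := ε/4) (y := (k:ℝ)*(1+ε)) ha ht ht2
  have hlo := gamma_chernoff_lower (a := (k:ℝ)/2) (t := ε/4) (y := (k:ℝ)*(1-ε)) ha ht
  have hup2 := le_trans hup (ENNReal.ofReal_le_ofReal (tail_scalar_upper' k h1 h2))
  have hlo2 := le_trans hlo (ENNReal.ofReal_le_ofReal (tail_scalar_lower' k h1 h2))
  calc chiSquaredMeasure k {x | x ≤ (k:ℝ)*(1-ε)} + chiSquaredMeasure k {x | (k:ℝ)*(1+ε) ≤ x}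
      ≤ ENNReal.ofReal (Real.exp (-(ε^2/16) * k)) + ENNReal.ofReal (Real.exp (-(ε^2/16) * k)) :=
        add_le_add hlo2 hup2
    _ = ENNReal.ofReal (2 * Real.exp (-(ε^2/16) * k)) := by
        rw [← ENNReal.ofReal_add (by positivity) (by positivity)]; ring_nf

theorem stmt_7 {Ω : Type*} [MeasurableSpace Ω] (P : Measure Ω) [IsProbabilityMeasure P]
    (k : ℕ → ℕ) (hk : ∀ n, 0 < k n)
    (hsum : ∀ ε : ℝ, 0 < ε → Summable (fun n => Real.exp (-ε * k n)))
    (X : ℕ → Ω → ℝ) (hXm : ∀ n, AEMeasurable (X n) P)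
    (hlaw : ∀ n, Measure.map (X n) P = chiMeasure (k n)) :
    ∀ᵐ ω ∂P, Tendsto (fun n => X n ω / Real.sqrt (k n)) atTop (nhds 1) := by
  -- step 1: event bound
  have event_bound : ∀ (ε : ℝ), 0 < ε → ε ≤ 1/4 → ∀ n,
      P {ω | ε < |X n ω / Real.sqrt (k n) - 1|}
        ≤ ENNReal.ofReal (2 * Real.exp (-(ε^2/16) * (k n))) := by
    intro ε h1 h2 n
    set S : Set ℝ := {x | ε < |x / Real.sqrt (k n) - 1|} with hSdef
    have hS : MeasurableSet S := by
      apply measurableSet_lt measurable_const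
      fun_prop
    have hP : P {ω | ε < |X n ω / Real.sqrt (k n) - 1|} = chiMeasure (k n) S := by
      rw [← hlaw n, Measure.map_apply_of_aemeasurable (hXm n) hS]
      rfl
    rw [hP, chiMeasure, Measure.map_apply Real.continuous_sqrt.measurable hS]
    have hkpos : (0:ℝ) < (k n : ℝ) := Nat.cast_pos.mpr (hk n)
    have hs0 : (0:ℝ) < Real.sqrt (k n) := Real.sqrt_pos.mpr hkpos
    have hsub : Real.sqrt ⁻¹' S ⊆
        {x : ℝ | x ≤ (k n : ℝ)*(1-ε)} ∪ {x : ℝ | (k n : ℝ)*(1+ε) ≤ x} := by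
      intro x hx
      simp only [Set.mem_preimage, hSdef, Set.mem_setOf_eq] at hx
      rcases lt_abs.mp hx with hcase | hcase
      · -- sqrt x / s - 1 > ε : upper tail
        right
        have h5 : Real.sqrt (k n) * (1 + ε) < Real.sqrt x := by
          rw [div_sub_one hs0.ne', lt_div_iff₀ hs0] at hcase
          nlinarith
        have h6 := (Real.lt_sqrt (by positivity)).mp h5
        have h7 : (Real.sqrt (k n) * (1 + ε))^2 = (k n : ℝ) * (1+ε)^2 := by
          rw [mul_pow, Real.sq_sqrt hkpos.le]
        simp only [Set.mem_setOf_eq]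
        nlinarith
      · -- sqrt x / s < 1 - ε : lower tail
        left
        have h5 : Real.sqrt x < Real.sqrt (k n) * (1 - ε) := by
          have hlt : Real.sqrt x / Real.sqrt (k n) < 1 - ε := by linarith
          rw [div_lt_iff₀ hs0] at hlt
          linarith
        have h6 := (Real.sqrt_lt' (by nlinarith)).mp h5
        have h7 : (Real.sqrt (k n) * (1 - ε))^2 = (k n : ℝ) * (1-ε)^2 := by
          rw [mul_pow, Real.sq_sqrt hkpos.le]
        simp only [Set.mem_setOf_eq]
        nlinarith
    calc chiSquaredMeasure (k n) (Real.sqrt ⁻¹' S)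
        ≤ chiSquaredMeasure (k n) ({x : ℝ | x ≤ (k n : ℝ)*(1-ε)}
            ∪ {x : ℝ | (k n : ℝ)*(1+ε) ≤ x}) := measure_mono hsub
      _ ≤ chiSquaredMeasure (k n) {x : ℝ | x ≤ (k n : ℝ)*(1-ε)}
            + chiSquaredMeasure (k n) {x : ℝ | (k n : ℝ)*(1+ε) ≤ x} := measure_union_le _ _
      _ ≤ ENNReal.ofReal (2 * Real.exp (-(ε^2/16) * (k n))) := chiSq_tail (k n) (hk n) h1 h2
  -- step 2: Borel-Cantelli for each ε
  have key : ∀ (ε : ℝ), 0 < ε → ε ≤ 1/4 →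
      ∀ᵐ ω ∂P, ∀ᶠ n in atTop, ¬ (ε < |X n ω / Real.sqrt (k n) - 1|) := by
    intro ε h1 h2
    have hsummable : Summable (fun n => 2 * Real.exp (-(ε^2/16) * (k n))) :=
      (hsum (ε^2/16) (by positivity)).mul_left 2
    have htsum : (∑' n, P {ω | ε < |X n ω / Real.sqrt (k n) - 1|}) ≠ ⊤ := by
      apply ne_top_of_le_ne_top (b := ∑' n, ENNReal.ofReal (2 * Real.exp (-(ε^2/16) * (k n))))
      · rw [← ENNReal.ofReal_tsum_of_nonneg (fun n => by positivity) hsummable]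
        exact ENNReal.ofReal_ne_top
      · exact ENNReal.tsum_le_tsum (fun n => event_bound ε h1 h2 n)
    exact ae_eventually_notMem htsum
  -- step 3: intersect over countably many ε
  have key2 : ∀ᵐ ω ∂P, ∀ j : ℕ,
      ∀ᶠ n in atTop, ¬ ((min (1/4) (1/((j:ℝ)+1)) : ℝ) < |X n ω / Real.sqrt (k n) - 1|) := by
    rw [ae_all_iff]
    intro j
    exact key _ (lt_min (by norm_num) (by positivity)) (min_le_left _ _)
  filter_upwards [key2] with ω hω
  rw [Metric.tendsto_atTop]
  intro δ hδ
  obtain ⟨j, hj⟩ := exists_nat_one_div_lt hδ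
  obtain ⟨N, hN⟩ := eventually_atTop.mp (hω j)
  refine ⟨N, fun n hn => ?_⟩
  have h8 := hN n hn
  rw [Real.dist_eq]
  push_neg at h8
  calc |X n ω / Real.sqrt (k n) - 1| ≤ min (1/4) (1/((j:ℝ)+1)) := h8
    _ ≤ 1/((j:ℝ)+1) := min_le_right _ _
    _ < δ := hj
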